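/- arXiv:1407.1647 — 2 statements merged into one kernel-verified Lean document; each statement's English description precedes it below -/
import Mathlib

section
/- In a finite reachability game, Player 1 has a memoryless winning strategy on W₁ = V \ W₀: there is a function τ : V₁ → V choosing an edge-successor for each v ∈ V₁ ∩ W₁ with a successor, such that every play starting in W₁ in which Player 1 follows τ never visits F (plays may also terminate in a dead-end belonging to Player 0, in which case Player 1 also wins). -/
/-- A reachability game: a digraph on `V` with Player 0's vertices `V0`
(Player 1 owns the complement), edge relation `E`, and target set `F`.
Player 0 wins a play iff it visits `F`. -/
structure RGame (V : Type*) where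
  V0 : Set V
  E : V → V → Prop
  F : Set V

namespace RGame

variable {V : Type*}

/-- `v` has at least one successor. -/
def hasSucc (g : RGame V) (v : V) : Prop := ∃ u, g.E v u

/-- A (possibly finite) play, encoded as `p : ℕ → Option V`: once `none`, always `none`;
the play stops exactly at dead-ends, and consecutive positions are joined by edges. -/
def IsPlay (g : RGame V) (p : ℕ → Option V) : Prop :=
  ∀ n, (p n = none → p (n + 1) = none) ∧
    ∀ w, p n = some w →
      ((¬g.hasSucc w → p (n + 1) = none) ∧
       (g.hasSucc w → ∃ u, p (n + 1) = some u) ∧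
       (∀ u, p (n + 1) = some u → g.E w u))

/-- The history (list of positions) of the play up to and including time `n`. -/
def histUpTo (p : ℕ → Option V) (n : ℕ) : List V :=
  (List.range (n + 1)).filterMap p

/-- Legality of a (history-dependent) strategy: it always chooses an edge-successor
of the current vertex whenever one exists. -/
def LegalStrat (g : RGame V) (σ : V → List V → V) : Prop :=
  ∀ w h, g.hasSucc w → g.E w (σ w h)

/-- The play `p` is consistent with Player 0 using strategy `σ`. -/
def Cons0 (g : RGame V) (σ : V → List V → V) (p : ℕ → Option V) : Prop :=
  ∀ n w, p n = some w → w ∈ g.V0 → g.hasSucc w → p (n + 1) = some (σ w (histUpTo p n))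

/-- The play `p` is consistent with Player 1 using strategy `τ`. -/
def Cons1 (g : RGame V) (τ : V → List V → V) (p : ℕ → Option V) : Prop :=
  ∀ n w, p n = some w → w ∉ g.V0 → g.hasSucc w → p (n + 1) = some (τ w (histUpTo p n))

/-- Legality of a memoryless strategy. -/
def LegalStratM (g : RGame V) (σ : V → V) : Prop :=
  ∀ w, g.hasSucc w → g.E w (σ w)

/-- Consistency of a play with Player 0 using a memoryless strategy. -/
def Cons0M (g : RGame V) (σ : V → V) (p : ℕ → Option V) : Prop :=
  ∀ n w, p n = some w → w ∈ g.V0 → g.hasSucc w → p (n + 1) = some (σ w)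

/-- Consistency of a play with Player 1 using a memoryless strategy. -/
def Cons1M (g : RGame V) (τ : V → V) (p : ℕ → Option V) : Prop :=
  ∀ n w, p n = some w → w ∉ g.V0 → g.hasSucc w → p (n + 1) = some (τ w)

/-- The play visits the target set `F`. -/
def Visits (g : RGame V) (p : ℕ → Option V) : Prop :=
  ∃ n w, p n = some w ∧ w ∈ g.F

/-- Player 0 has a winning strategy from `v`: some legal strategy forcing every
consistent play starting at `v` to visit `F`. -/
def Win0From (g : RGame V) (v : V) : Prop :=
  ∃ σ : V → List V → V, g.LegalStrat σ ∧
    ∀ p : ℕ → Option V, g.IsPlay p → p 0 = some v → g.Cons0 σ p → g.Visits p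

/-- Player 1 has a winning strategy from `v`: some legal strategy such that no
consistent play starting at `v` ever visits `F`. -/
def Win1From (g : RGame V) (v : V) : Prop :=
  ∃ τ : V → List V → V, g.LegalStrat τ ∧
    ∀ p : ℕ → Option V, g.IsPlay p → p 0 = some v → g.Cons1 τ p → ¬g.Visits p

/-- The attractor sets: `attr 0 = F`, and `attr (n+1)` additionally contains the
Player-0 vertices with some successor in `attr n` and the Player-1 vertices having
a successor and all successors in `attr n`. -/
def attr (g : RGame V) : ℕ → Set V
  | 0 => g.F
  | n + 1 =>
      g.attr n ∪ {v | v ∈ g.V0 ∧ ∃ u, g.E v u ∧ u ∈ g.attr n}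
        ∪ {v | v ∉ g.V0 ∧ g.hasSucc v ∧ ∀ u, g.E v u → u ∈ g.attr n}

end RGame


/-!
The complement of Player 0's winning region is a trap for Player 0: from a Player-0 vertex
outside it every move stays outside (otherwise Player 0 would win by moving in), and from a
Player-1 vertex outside it with a successor some move stays outside (otherwise every move
leads into the winning region, which Player 0 then wins by switching strategies after one
step). Letting `τ` pick such a move keeps every play in the complement, which misses `F`.
-/

namespace RGame

variable {V : Type*} {g : RGame V}

open Classical in
noncomputable def someSucc (g : RGame V) (w : V) : V :=
  if h : g.hasSucc w then h.choose else w

lemma legalStratM_someSucc (g : RGame V) : g.LegalStratM g.someSucc := fun w h => by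
  classical
  rw [someSucc, dif_pos h]
  exact h.choose_spec

lemma IsPlay.exists_pred {p : ℕ → Option V} (hp : g.IsPlay p) {n : ℕ} {w : V}
    (hw : p (n + 1) = some w) : ∃ w', p n = some w' ∧ g.E w' w := by
  cases hn : p n with
  | none => simp [(hp n).1 hn] at hw
  | some w' => exact ⟨w', rfl, ((hp n).2 w' hn).2.2 w hw⟩

section History

variable {p : ℕ → Option V} {v : V}

lemma histUpTo_zero (h0 : p 0 = some v) : histUpTo p 0 = [v] := by
  simp [histUpTo, h0]

lemma histUpTo_succ (h0 : p 0 = some v) (n : ℕ) :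
    histUpTo p (n + 1) = v :: histUpTo (fun k => p (k + 1)) n := by
  rw [histUpTo, List.range_succ_eq_map, List.filterMap_cons, h0, List.filterMap_map]
  rfl

lemma exists_histUpTo_eq_cons (h0 : p 0 = some v) (n : ℕ) : ∃ t, histUpTo p n = v :: t := by
  cases n with
  | zero => exact ⟨[], histUpTo_zero h0⟩
  | succ m => exact ⟨_, histUpTo_succ h0 m⟩

end History

open Classical in
/-- A strategy that wins from `b` whenever one exists. -/
noncomputable def winStrat (g : RGame V) (b : V) : V → List V → V :=
  if hb : g.Win0From b then hb.choose else fun w _ => g.someSucc w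

lemma legalStrat_winStrat (g : RGame V) (b : V) : g.LegalStrat (g.winStrat b) := by
  unfold winStrat
  split_ifs with hb
  · exact hb.choose_spec.1
  · exact fun w _ => g.legalStratM_someSucc w

lemma winStrat_spec {b : V} (hb : g.Win0From b) {p : ℕ → Option V} (hp : g.IsPlay p)
    (h0 : p 0 = some b) (hc : g.Cons0 (g.winStrat b) p) : g.Visits p := by
  unfold winStrat at hc
  rw [dif_pos hb] at hc
  exact hb.choose_spec.2 p hp h0 hc

/-- Play the first move by `first`, then continue with the winning strategy of the vertex
reached, reading the history from that vertex on. -/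
noncomputable def thenWinStrat (g : RGame V) (first : V → V) : V → List V → V
  | w, _ :: b :: t => g.winStrat b w (b :: t)
  | w, _ => first w

lemma legalStrat_thenWinStrat {first : V → V} (hfirst : g.LegalStratM first) :
    g.LegalStrat (g.thenWinStrat first) := by
  intro w h hs
  match h with
  | _ :: b :: t => exact g.legalStrat_winStrat b w (b :: t) hs
  | [_] | [] => exact hfirst w hs

lemma Cons0.shift_thenWinStrat {first : V → V} {p : ℕ → Option V} {v u : V}
    (hc : g.Cons0 (g.thenWinStrat first) p) (h0 : p 0 = some v) (h1 : p 1 = some u) :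
    g.Cons0 (g.winStrat u) (fun k => p (k + 1)) := by
  intro n w hw hw0 hs
  obtain ⟨t, ht⟩ := exists_histUpTo_eq_cons (p := fun k => p (k + 1)) h1 n
  have := hc (n + 1) w hw hw0 hs
  rw [histUpTo_succ h0, ht] at this
  rwa [ht]

lemma win0From_of_forall_next_win0From {v : V} {first : V → V}
    (hfirst : g.LegalStratM first)
    (hnext : ∀ p, g.IsPlay p → p 0 = some v → g.Cons0 (g.thenWinStrat first) p →
      ∃ u, p 1 = some u ∧ g.Win0From u) :
    g.Win0From v := by
  refine ⟨g.thenWinStrat first, legalStrat_thenWinStrat hfirst, fun p hp h0 hc => ?_⟩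
  obtain ⟨u, h1, hu⟩ := hnext p hp h0 hc
  obtain ⟨n, w, hn, hw⟩ :=
    winStrat_spec hu (fun n => hp (n + 1)) h1 (hc.shift_thenWinStrat h0 h1)
  exact ⟨n + 1, w, hn, hw⟩

lemma win0From_of_mem_F {v : V} (hv : v ∈ g.F) : g.Win0From v :=
  ⟨fun w _ => g.someSucc w, fun w _ => g.legalStratM_someSucc w, fun _ _ h0 _ => ⟨0, v, h0, hv⟩⟩

lemma win0From_of_mem_V0_of_E {v u : V} (hv : v ∈ g.V0) (he : g.E v u) (hu : g.Win0From u) :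
    g.Win0From v := by
  classical
  have hfirst : g.LegalStratM (Function.update g.someSucc v u) := by
    intro w hs
    rcases eq_or_ne w v with rfl | hwv
    · simpa using he
    · simpa [hwv] using g.legalStratM_someSucc w hs
  refine win0From_of_forall_next_win0From hfirst fun p _ h0 hc => ⟨u, ?_, hu⟩
  simpa [histUpTo_zero h0, thenWinStrat] using hc 0 v h0 hv ⟨u, he⟩

lemma win0From_of_hasSucc_of_forall_E {v : V} (hs : g.hasSucc v)
    (hall : ∀ u, g.E v u → g.Win0From u) : g.Win0From v := by
  refine win0From_of_forall_next_win0From g.legalStratM_someSucc fun p hp h0 _ => ?_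
  obtain ⟨u, h1⟩ := ((hp 0).2 v h0).2.1 hs
  exact ⟨u, h1, hall u (((hp 0).2 v h0).2.2 u h1)⟩

def IsTrap (g : RGame V) (S : Set V) : Prop :=
  ∀ v ∈ S, (v ∈ g.V0 → ∀ u, g.E v u → u ∈ S) ∧ (v ∉ g.V0 → g.hasSucc v → ∃ u, g.E v u ∧ u ∈ S)

lemma isTrap_setOf_not_win0From (g : RGame V) : g.IsTrap {v | ¬g.Win0From v} :=
  fun _ hv =>
    ⟨fun hv0 u he hu => hv (win0From_of_mem_V0_of_E hv0 he hu), fun _ hs => by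
      by_contra! hall
      exact hv (win0From_of_hasSucc_of_forall_E hs fun u he => not_not.mp (hall u he))⟩

lemma IsTrap.exists_strategy {S : Set V} (hS : g.IsTrap S) :
    ∃ τ : V → V, ∀ v ∈ S, v ∉ g.V0 → g.hasSucc v → g.E v (τ v) ∧ τ v ∈ S := by
  have hchoice : ∀ v, ∃ u, v ∈ S → v ∉ g.V0 → g.hasSucc v → g.E v u ∧ u ∈ S := fun v => by
    by_cases h : v ∈ S ∧ v ∉ g.V0 ∧ g.hasSucc v
    · obtain ⟨u, hu⟩ := (hS v h.1).2 h.2.1 h.2.2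
      exact ⟨u, fun _ _ _ => hu⟩
    · exact ⟨v, fun h1 h2 h3 => absurd ⟨h1, h2, h3⟩ h⟩
  choose τ hτ using hchoice
  exact ⟨τ, hτ⟩

lemma IsTrap.mem_of_cons1M {S : Set V} (hS : g.IsTrap S) {τ : V → V}
    (hτ : ∀ v ∈ S, v ∉ g.V0 → g.hasSucc v → τ v ∈ S) {p : ℕ → Option V} (hp : g.IsPlay p)
    {v : V} (h0 : p 0 = some v) (hv : v ∈ S) (hc : g.Cons1M τ p) :
    ∀ n w, p n = some w → w ∈ S := by
  intro n
  induction n with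
  | zero => intro w hw; rw [h0, Option.some_inj] at hw; exact hw ▸ hv
  | succ n ih =>
    intro w hw
    obtain ⟨w', hw', he⟩ := hp.exists_pred hw
    have hw'S := ih w' hw'
    by_cases hw'0 : w' ∈ g.V0
    · exact (hS w' hw'S).1 hw'0 w he
    · rw [hc n w' hw' hw'0 ⟨w, he⟩, Option.some_inj] at hw
      exact hw ▸ hτ w' hw'S hw'0 ⟨w, he⟩

end RGame

theorem memoryless_winning_strategy_player1_general {V : Type*} (g : RGame V) :
    ∃ τ : V → V,
      (∀ v : V, v ∉ g.V0 → ¬g.Win0From v → g.hasSucc v → g.E v (τ v)) ∧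
      ∀ v : V, ¬g.Win0From v →
        ∀ p : ℕ → Option V, g.IsPlay p → p 0 = some v → g.Cons1M τ p → ¬g.Visits p := by
  have hS := g.isTrap_setOf_not_win0From
  obtain ⟨τ, hτ⟩ := hS.exists_strategy
  refine ⟨τ, fun v hv1 hv hs => (hτ v hv hv1 hs).1, ?_⟩
  rintro v hv p hp h0 hc ⟨n, w, hn, hwF⟩
  exact hS.mem_of_cons1M (fun v hv hv1 hs => (hτ v hv hv1 hs).2) hp h0 hv hc n w hn
    (RGame.win0From_of_mem_F hwF)

/-- In a finite reachability game, Player 1 has a memoryless winning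
strategy on `W₁ = V \ W₀`: a function `τ` choosing an edge-successor at each
Player-1 vertex of `W₁` having a successor, such that no play starting in `W₁` in
which Player 1 follows `τ` ever visits `F` (plays may terminate at a Player-0
dead-end, in which case Player 1 also wins). -/
theorem memoryless_winning_strategy_player1 {V : Type*} [Fintype V] (g : RGame V) :
    ∃ τ : V → V,
      (∀ v : V, v ∉ g.V0 → ¬g.Win0From v → g.hasSucc v → g.E v (τ v)) ∧
      ∀ v : V, ¬g.Win0From v →
        ∀ p : ℕ → Option V, g.IsPlay p → p 0 = some v → g.Cons1M τ p → ¬g.Visits p :=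
  memoryless_winning_strategy_player1_general g
end

section
/- The winning regions of a finite reachability game partition the vertex set: every vertex lies in exactly one of W₀ and W₁ (positional determinacy of reachability games). -/
/-!
Let `attr n` be the set of vertices from which Player 0 can force a visit to `F` within `n`
moves. From `attr n`, Player 0 wins by always moving one level closer to `F`. On a finite
vertex set the increasing sequence `attr n` stabilises at some `attr N`, whose complement is a
trap for Player 0: Player 0 cannot leave it and Player 1 can always stay in it, so Player 1
wins from there. The players cannot both win from one vertex: the play on which their winning
strategies meet would both visit and avoid `F`.
-/

namespace RGame

variable {V : Type*} (g : RGame V)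

lemma attr_mono : Monotone g.attr :=
  monotone_nat_of_le_succ fun _ _ hx => Or.inl (Or.inl hx)

lemma exists_attr_succ_subset [Finite V] : ∃ N, g.attr (N + 1) ⊆ g.attr N := by
  obtain ⟨N, hN⟩ := WellFoundedGT.monotone_chain_condition ⟨g.attr, g.attr_mono⟩
  exact ⟨N, (hN (N + 1) N.le_succ).symm.subset⟩

open Classical in
lemma exists_legalStratM (P : V → V → Prop) :
    ∃ σ : V → V, g.LegalStratM σ ∧ ∀ w, (∃ u, g.E w u ∧ P w u) → P w (σ w) := by
  refine ⟨fun w => if h : ∃ u, g.E w u ∧ P w u then h.choose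
    else if h' : g.hasSucc w then h'.choose else w, fun w hw => ?_, fun w h => ?_⟩
  · by_cases h : ∃ u, g.E w u ∧ P w u
    · simpa [dif_pos h] using h.choose_spec.1
    · simpa [dif_neg h, dif_pos hw] using hw.choose_spec
  · simpa [dif_pos h] using h.choose_spec.2

lemma win0From_of_memoryless {v : V} {σ : V → V} (hσ : g.LegalStratM σ)
    (hwin : ∀ p, g.IsPlay p → p 0 = some v → g.Cons0M σ p → g.Visits p) : g.Win0From v :=
  ⟨fun w _ => σ w, fun w _ => hσ w, hwin⟩

lemma win1From_of_memoryless {v : V} {τ : V → V} (hτ : g.LegalStratM τ)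
    (hwin : ∀ p, g.IsPlay p → p 0 = some v → g.Cons1M τ p → ¬g.Visits p) : g.Win1From v :=
  ⟨fun w _ => τ w, fun w _ => hτ w, hwin⟩

/-- The successor found here descends from every level `w` lies in, so it can be fixed once and
for all by a memoryless strategy. -/
lemma exists_descending_succ {n : ℕ} {w : V} (hw0 : w ∈ g.V0) (hw : w ∈ g.attr (n + 1))
    (hwn : w ∉ g.attr n) : ∃ u, g.E w u ∧ ∀ m, w ∈ g.attr (m + 1) → u ∈ g.attr m := by
  obtain ⟨u, hwu, hu⟩ : ∃ u, g.E w u ∧ u ∈ g.attr n := by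
    rcases hw with (h | ⟨-, h⟩) | ⟨h, -⟩
    exacts [absurd h hwn, h, absurd hw0 h]
  refine ⟨u, hwu, fun m hm => g.attr_mono ?_ hu⟩
  by_contra! hmn
  exact hwn (g.attr_mono hmn hm)

lemma visits_of_mem_attr {σ : V → V}
    (hσ : ∀ w, w ∈ g.V0 → ∀ n, w ∈ g.attr (n + 1) → w ∉ g.attr n → σ w ∈ g.attr n)
    {p : ℕ → Option V} (hp : g.IsPlay p) (hc : g.Cons0M σ p) :
    ∀ n k w, p k = some w → w ∈ g.attr n → g.Visits p := by
  intro n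
  induction n with
  | zero => exact fun k w hk hw => ⟨k, w, hk, hw⟩
  | succ n ih =>
    intro k w hk hw
    by_cases hwn : w ∈ g.attr n
    · exact ih k w hk hwn
    rcases id hw with (h | ⟨hw0, u, hwu, -⟩) | ⟨-, hsucc, hall⟩
    · exact absurd h hwn
    · exact ih (k + 1) _ (hc k w hk hw0 ⟨u, hwu⟩) (hσ w hw0 n hw hwn)
    · obtain ⟨u, hu⟩ := ((hp k).2 w hk).2.1 hsucc
      exact ih (k + 1) u hu (hall u (((hp k).2 w hk).2.2 u hu))

theorem win0From_of_mem_attr {n : ℕ} {v : V} (hv : v ∈ g.attr n) : g.Win0From v := by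
  obtain ⟨σ, hσ, hdesc⟩ := g.exists_legalStratM fun w u => ∀ m, w ∈ g.attr (m + 1) → u ∈ g.attr m
  refine g.win0From_of_memoryless hσ fun p hp h0 hc => g.visits_of_mem_attr ?_ hp hc n 0 v h0 hv
  exact fun w hw0 n hw hwn => hdesc w (g.exists_descending_succ hw0 hw hwn) n hw

theorem win1From_of_not_mem_attr {N : ℕ} (hN : g.attr (N + 1) ⊆ g.attr N) {v : V}
    (hv : v ∉ g.attr N) : g.Win1From v := by
  obtain ⟨τ, hτ, hstay⟩ := g.exists_legalStratM fun _ u => u ∉ g.attr N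
  refine g.win1From_of_memoryless hτ fun p hp h0 hc ⟨k, w, hk, hwF⟩ => ?_
  have avoid : ∀ k w, p k = some w → w ∉ g.attr N := by
    intro k
    induction k with
    | zero => intro w hw; rw [h0, Option.some_inj] at hw; exact hw ▸ hv
    | succ k ih =>
      intro w hw hwA
      obtain ⟨x, hx⟩ : ∃ x, p k = some x := by
        cases hpk : p k with
        | none => simp [(hp k).1 hpk] at hw
        | some x => exact ⟨x, rfl⟩
      have hxw : g.E x w := ((hp k).2 x hx).2.2 w hw
      refine ih x hx (hN ?_)
      by_cases hx0 : x ∈ g.V0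
      · exact Or.inl (Or.inr ⟨hx0, w, hxw, hwA⟩)
      · refine Or.inr ⟨hx0, ⟨w, hxw⟩, fun u hxu => ?_⟩
        by_contra hu
        have hτx := hstay x ⟨u, hxu, hu⟩
        rw [hc k x hx hx0 ⟨w, hxw⟩, Option.some_inj] at hw
        exact hτx (hw ▸ hwA)
  exact avoid k w hk (g.attr_mono (Nat.zero_le N) hwF)

section Outcome

variable {g}

lemma histUpTo_succ_s7 (p : ℕ → Option V) (n : ℕ) :
    histUpTo p (n + 1) = histUpTo p n ++ (p (n + 1)).toList := by
  rw [histUpTo, histUpTo, List.range_succ (n := n + 1), List.filterMap_append]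
  cases h : p (n + 1) <;> simp [h]

open Classical in
noncomputable def profile (g : RGame V) (σ τ : V → List V → V) : V → List V → V :=
  fun w h => if w ∈ g.V0 then σ w h else τ w h

lemma LegalStrat.profile {σ τ : V → List V → V} (hσ : g.LegalStrat σ) (hτ : g.LegalStrat τ) :
    g.LegalStrat (g.profile σ τ) := by
  intro w h hw
  unfold RGame.profile
  split_ifs
  exacts [hσ w h hw, hτ w h hw]

open Classical in
/-- A state is the current position (`none` once the play has stopped) and the history. -/
noncomputable def step (g : RGame V) (m : V → List V → V) :
    Option V × List V → Option V × List V
  | (some w, h) => if g.hasSucc w then (some (m w h), h ++ [m w h]) else (none, h)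
  | (none, h) => (none, h)

lemma step_snd (m : V → List V → V) (s : Option V × List V) :
    (g.step m s).2 = s.2 ++ (g.step m s).1.toList := by
  rcases s with ⟨_ | w, h⟩
  · simp [step]
  · by_cases hw : g.hasSucc w <;> simp [step, hw]

noncomputable def outcome (g : RGame V) (m : V → List V → V) (v : V) (n : ℕ) : Option V :=
  ((g.step m)^[n] (some v, [v])).1

lemma iterate_step (m : V → List V → V) (v : V) (n : ℕ) :
    (g.step m)^[n] (some v, [v]) = (g.outcome m v n, histUpTo (g.outcome m v) n) := by
  induction n with
  | zero => simp [outcome, histUpTo]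
  | succ n ih =>
    have hfst : (g.step m (g.outcome m v n, histUpTo (g.outcome m v) n)).1 =
        g.outcome m v (n + 1) := by
      rw [← ih]
      exact (congrArg Prod.fst (Function.iterate_succ_apply' _ n _)).symm
    rw [Function.iterate_succ_apply', ih, histUpTo_succ_s7, ← hfst]
    exact Prod.ext rfl (step_snd m _)

lemma outcome_succ (m : V → List V → V) (v : V) (n : ℕ) :
    g.outcome m v (n + 1) = (g.step m (g.outcome m v n, histUpTo (g.outcome m v) n)).1 := by
  rw [outcome, Function.iterate_succ_apply', iterate_step]

lemma isPlay_outcome {m : V → List V → V} (hm : g.LegalStrat m) (v : V) :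
    g.IsPlay (g.outcome m v) := by
  intro n
  refine ⟨fun hn => by simp [outcome_succ, hn, step], fun w hn => ?_⟩
  by_cases hw : g.hasSucc w
  · simp only [outcome_succ, hn, step, if_pos hw, Option.some_inj]
    exact ⟨fun h => absurd hw h, fun _ => ⟨_, rfl⟩, fun u hu => hu ▸ hm w _ hw⟩
  · simp [outcome_succ, hn, step, hw]

lemma outcome_succ_of_hasSucc {m : V → List V → V} {v w : V} {n : ℕ}
    (hn : g.outcome m v n = some w) (hw : g.hasSucc w) :
    g.outcome m v (n + 1) = some (m w (histUpTo (g.outcome m v) n)) := by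
  simp [outcome_succ, hn, step, hw]

lemma cons0_outcome_profile (σ τ : V → List V → V) (v : V) :
    g.Cons0 σ (g.outcome (g.profile σ τ) v) := by
  intro n w hn hw0 hw
  rw [outcome_succ_of_hasSucc hn hw, profile, if_pos hw0]

lemma cons1_outcome_profile (σ τ : V → List V → V) (v : V) :
    g.Cons1 τ (g.outcome (g.profile σ τ) v) := by
  intro n w hn hw0 hw
  rw [outcome_succ_of_hasSucc hn hw, profile, if_neg hw0]

end Outcome

theorem not_win0From_and_win1From (v : V) : ¬(g.Win0From v ∧ g.Win1From v) := by
  rintro ⟨⟨σ, hσ, hσwin⟩, τ, hτ, hτwin⟩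
  have hplay := isPlay_outcome (hσ.profile hτ) v
  exact hτwin _ hplay rfl (cons1_outcome_profile σ τ v)
    (hσwin _ hplay rfl (cons0_outcome_profile σ τ v))

end RGame

/-- Positional determinacy of finite reachability games: every vertex
lies in exactly one of the two winning regions `W₀` and `W₁`. -/
theorem reachability_determinacy {V : Type*} [Fintype V] (g : RGame V) :
    ∀ v : V, Xor' (g.Win0From v) (g.Win1From v) := by
  intro v
  obtain ⟨N, hN⟩ := g.exists_attr_succ_subset
  by_cases hv : v ∈ g.attr N
  · have h0 := g.win0From_of_mem_attr hv
    exact Or.inl ⟨h0, fun h1 => g.not_win0From_and_win1From v ⟨h0, h1⟩⟩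
  · have h1 := g.win1From_of_not_mem_attr hN hv
    exact Or.inr ⟨h1, fun h0 => g.not_win0From_and_win1From v ⟨h0, h1⟩⟩
end
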